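/- Let (X,ρ) be a metric space, let P be an abstract porosity on X, and let A ⊆ X be a closed set that is not σ-P-porous. Then A is not P-reducible; that is, there exists a nonempty closed set F ⊆ A such that no P-porous subset of F has nonempty interior relative to F. -/

import Mathlib

open Metric Filter Set

/-- An abstract porosity on a metric space `X`: a relation between points and subsets
of `X` satisfying the axioms (A1), (A2), (A3). -/
structure AbstractPorosity (X : Type*) [MetricSpace X] where
  rel : X → Set X → Prop
  mono : ∀ (x : X) (A B : Set X), A ⊆ B → rel x B → rel x A
  loc : ∀ (x : X) (A : Set X), rel x A ↔ ∃ r > 0, rel x (A ∩ Metric.ball x r)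
  clos : ∀ (x : X) (A : Set X), rel x A ↔ rel x (closure A)

variable {X : Type*} [MetricSpace X]

/-- `A` is `P`-porous if `P(x,A)` holds at each point `x ∈ A`. -/
def AbstractPorosity.Porous (P : AbstractPorosity X) (A : Set X) : Prop :=
  ∀ x ∈ A, P.rel x A

/-- `A` is σ-`P`-porous if it is a countable union of `P`-porous sets. -/
def AbstractPorosity.SigmaPorous (P : AbstractPorosity X) (A : Set X) : Prop :=
  ∃ f : ℕ → Set X, (∀ n, P.Porous (f n)) ∧ A = ⋃ n, f n

/-- `A` is σ-`P`-porous at `x` if some `A ∩ B(x,r)` (r>0) is σ-`P`-porous. -/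
def AbstractPorosity.SigmaPorousAt (P : AbstractPorosity X) (A : Set X) (x : X) : Prop :=
  ∃ r > 0, P.SigmaPorous (A ∩ Metric.ball x r)

/-- The kernel `K_P(A)`: points of `A` at which `A` is not σ-`P`-porous. -/
def AbstractPorosity.kernel (P : AbstractPorosity X) (A : Set X) : Set X :=
  {x ∈ A | ¬ P.SigmaPorousAt A x}

/-!
The points of `A` at which `A` is not locally σ-`P`-porous form the kernel `K`. Being
σ-porous is a local property (a Stone-type σ-discrete refinement of a cover by balls of a
fixed radius turns local decompositions into a global one, since a union of uniformly
separated porous sets is porous), so `A \ K` is σ-porous. Hence `K` is nonempty, and it is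
closed when `A` is. If a porous `S` contained `U ∩ K` with `U` open and `x ∈ U ∩ K`, then
near `x` the set `A` would be covered by `S ∪ (A \ K)`, so `A` would be σ-porous at `x`.
-/

theorem Metric.exists_separated_refinement_ball {Y : Type*} [PseudoMetricSpace Y] (M : Set Y)
    {δ : ℝ} (hδ : 0 < δ) :
    ∃ C : ℕ → M → Set Y, (∀ n x, C n x ⊆ M ∩ ball (x : Y) δ) ∧ M = ⋃ n, ⋃ x, C n x ∧
      ∀ n, Pairwise fun x x' => ∀ y ∈ C n x, ∀ y' ∈ C n x', 1 / (n + 1 : ℝ) ≤ dist y y' := by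
  let r : Y → Y → Prop := WellOrderingRel
  have hwf : WellFounded r := WellOrderingRel.isWellOrder.wf
  -- `y ∈ C n x` when `x` is the `r`-first point of `M` that is `δ / 2`-close to `y`, with a
  -- margin `1 / (n + 1)`; the margin forces separation from pieces with an `r`-later centre.
  set C : ℕ → M → Set Y := fun n x => {y ∈ M | dist (x : Y) y < δ / 2 - 1 / (n + 1) ∧
    ∀ z ∈ M, dist z y < δ / 2 → ¬ r z x}
  have hsep_of_lt : ∀ n (x x' : M), r x x' →
      ∀ y ∈ C n x, ∀ y' ∈ C n x', 1 / (n + 1 : ℝ) ≤ dist y y' := by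
    rintro n x x' hxx' y ⟨-, hxy, -⟩ y' ⟨-, -, hfirst'⟩
    have hfar : δ / 2 ≤ dist (x : Y) y' := not_lt.1 fun h => hfirst' x x.2 h hxx'
    linarith [dist_triangle (x : Y) y y']
  refine ⟨C, ?_, ?_, fun n x x' hne y hy y' hy' => ?_⟩
  · rintro n x y ⟨hyM, hxy, -⟩
    have : (0 : ℝ) ≤ 1 / (n + 1) := by positivity
    exact ⟨hyM, mem_ball'.2 (by linarith)⟩
  · refine Subset.antisymm (fun y hy => ?_) (iUnion₂_subset fun n x y hy => hy.1)
    set S := {x ∈ M | dist x y < δ / 2}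
    have hS : S.Nonempty := ⟨y, hy, by simpa using half_pos hδ⟩
    obtain ⟨hxM, hxy⟩ := hwf.min_mem S hS
    obtain ⟨n, hn⟩ := exists_nat_one_div_lt (sub_pos.2 hxy)
    exact mem_iUnion₂.2 ⟨n, ⟨_, hxM⟩, hy, by linarith,
      fun z hz hzy => hwf.not_lt_min S (show z ∈ S from ⟨hz, hzy⟩)⟩
  · rcases trichotomous_of r (x : Y) x' with h | h | h
    · exact hsep_of_lt n x x' h y hy y' hy'
    · exact absurd (Subtype.ext h) hne
    · exact dist_comm y y' ▸ hsep_of_lt n x' x h y' hy' y hy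

namespace AbstractPorosity

variable {P : AbstractPorosity X} {A B : Set X}

theorem Porous.mono (hB : P.Porous B) (h : A ⊆ B) : P.Porous A :=
  fun x hx => P.mono x A B h (hB x (h hx))

theorem SigmaPorous.mono (hB : P.SigmaPorous B) (h : A ⊆ B) : P.SigmaPorous A := by
  obtain ⟨f, hf, rfl⟩ := hB
  exact ⟨fun n => A ∩ f n, fun n => (hf n).mono inter_subset_right,
    by rw [← inter_iUnion, inter_eq_self_of_subset_left h]⟩

theorem SigmaPorousAt.mono {x : X} (hB : P.SigmaPorousAt B x) (h : A ⊆ B) :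
    P.SigmaPorousAt A x :=
  let ⟨r, hr, hBr⟩ := hB
  ⟨r, hr, hBr.mono (inter_subset_inter_left _ h)⟩

theorem Porous.sigmaPorous (h : P.Porous A) : P.SigmaPorous A :=
  ⟨fun _ => A, fun _ => h, (iUnion_const A).symm⟩

theorem sigmaPorous_iUnion_of_porous {ι : Type*} [Countable ι] {f : ι → Set X}
    (h : ∀ i, P.Porous (f i)) : P.SigmaPorous (⋃ i, f i) := by
  rcases isEmpty_or_nonempty ι with hι | hι
  · rw [iUnion_of_empty]
    exact Porous.sigmaPorous fun x hx => absurd hx (notMem_empty x)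
  · obtain ⟨e, he⟩ := exists_surjective_nat ι
    exact ⟨f ∘ e, fun n => h (e n), (he.iUnion_comp f).symm⟩

theorem sigmaPorous_iUnion {ι : Type*} [Countable ι] {f : ι → Set X}
    (h : ∀ i, P.SigmaPorous (f i)) : P.SigmaPorous (⋃ i, f i) := by
  choose g hg hfg using h
  have hcover : (⋃ i, f i) = ⋃ p : ι × ℕ, g p.1 p.2 := by
    rw [iUnion_prod']
    exact iUnion_congr hfg
  exact hcover ▸ sigmaPorous_iUnion_of_porous fun p => hg p.1 p.2

theorem SigmaPorous.union (hA : P.SigmaPorous A) (hB : P.SigmaPorous B) :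
    P.SigmaPorous (A ∪ B) := by
  rw [union_eq_iUnion]
  exact sigmaPorous_iUnion fun b => by cases b <;> assumption

theorem porous_iUnion_of_separated {ι : Type*} {T : ι → Set X} {ε : ℝ} (hε : 0 < ε)
    (hsep : Pairwise fun i j => ∀ y ∈ T i, ∀ y' ∈ T j, ε ≤ dist y y')
    (h : ∀ i, P.Porous (T i)) : P.Porous (⋃ i, T i) := by
  intro x hx
  obtain ⟨i, hxi⟩ := mem_iUnion.1 hx
  have hlocal : (⋃ j, T j) ∩ ball x ε ⊆ T i := by
    rintro y ⟨hy, hyx⟩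
    obtain ⟨j, hyj⟩ := mem_iUnion.1 hy
    by_contra hyi
    have hji : j ≠ i := fun hji => hyi (hji ▸ hyj)
    exact (hsep hji y hyj x hxi).not_gt (mem_ball.1 hyx)
  exact (P.loc x _).2 ⟨ε, hε, P.mono x _ _ hlocal (h i x hxi)⟩

theorem sigmaPorous_iUnion_of_separated {ι : Type*} {T : ι → Set X} {ε : ℝ} (hε : 0 < ε)
    (hsep : Pairwise fun i j => ∀ y ∈ T i, ∀ y' ∈ T j, ε ≤ dist y y')
    (h : ∀ i, P.SigmaPorous (T i)) : P.SigmaPorous (⋃ i, T i) := by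
  choose g hg hTg using h
  have hgT : ∀ i k, g i k ⊆ T i := fun i k => hTg i ▸ subset_iUnion (g i) k
  have hcover : (⋃ i, T i) = ⋃ k, ⋃ i, g i k := by
    simp_rw [hTg]
    exact iUnion_comm _
  refine hcover ▸ sigmaPorous_iUnion_of_porous fun k =>
    porous_iUnion_of_separated hε (fun i j hij y hy y' hy' => ?_) fun i => hg i k
  exact hsep hij y (hgT i k hy) y' (hgT j k hy')

theorem sigmaPorous_of_forall_sigmaPorous_inter_ball {M : Set X} {δ : ℝ} (hδ : 0 < δ)
    (h : ∀ x ∈ M, P.SigmaPorous (M ∩ ball x δ)) : P.SigmaPorous M := by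
  obtain ⟨C, hCM, hcover, hsep⟩ := exists_separated_refinement_ball M hδ
  rw [hcover]
  exact sigmaPorous_iUnion fun n => sigmaPorous_iUnion_of_separated Nat.one_div_pos_of_nat
    (hsep n) fun x => (h x x.2).mono (hCM n x)

theorem sigmaPorous_of_forall_sigmaPorousAt {M : Set X}
    (h : ∀ x ∈ M, P.SigmaPorousAt M x) : P.SigmaPorous M := by
  let Mn : ℕ → Set X := fun n => {x ∈ M | P.SigmaPorous (M ∩ ball x (1 / (n + 1)))}
  have hcover : M = ⋃ n, Mn n := by
    refine Subset.antisymm (fun x hx => ?_) (iUnion_subset fun n x hx => hx.1)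
    obtain ⟨r, hr, hMr⟩ := h x hx
    obtain ⟨n, hn⟩ := exists_nat_one_div_lt hr
    exact mem_iUnion.2 ⟨n, hx, hMr.mono (inter_subset_inter_right M (ball_subset_ball hn.le))⟩
  rw [hcover]
  exact sigmaPorous_iUnion fun n => sigmaPorous_of_forall_sigmaPorous_inter_ball
    Nat.one_div_pos_of_nat fun x hx => hx.2.mono (inter_subset_inter_left _ fun y hy => hy.1)

theorem kernel_subset (P : AbstractPorosity X) (A : Set X) : P.kernel A ⊆ A :=
  fun _ hx => hx.1

theorem sigmaPorous_diff_kernel (P : AbstractPorosity X) (A : Set X) :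
    P.SigmaPorous (A \ P.kernel A) :=
  sigmaPorous_of_forall_sigmaPorousAt fun _ hx =>
    (not_not.1 fun hx' => hx.2 ⟨hx.1, hx'⟩).mono sdiff_subset

theorem kernel_nonempty (hA : ¬ P.SigmaPorous A) : (P.kernel A).Nonempty := by
  by_contra hK
  rw [not_nonempty_iff_eq_empty] at hK
  exact hA (by simpa [hK] using P.sigmaPorous_diff_kernel A)

theorem isOpen_setOf_sigmaPorousAt (P : AbstractPorosity X) (A : Set X) :
    IsOpen {x | P.SigmaPorousAt A x} := by
  refine isOpen_iff_forall_mem_open.2 fun x ⟨r, hr, hAr⟩ => ⟨ball x r, fun y hy => ?_,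
    isOpen_ball, mem_ball_self hr⟩
  obtain ⟨ε, hε, hball⟩ := Metric.isOpen_iff.1 isOpen_ball y hy
  exact ⟨ε, hε, hAr.mono (inter_subset_inter_right A hball)⟩

theorem isClosed_kernel (hA : IsClosed A) : IsClosed (P.kernel A) :=
  hA.inter (P.isOpen_setOf_sigmaPorousAt A).isClosed_compl

theorem inter_kernel_eq_empty_of_subset_porous {S U : Set X} (hS : P.Porous S) (hU : IsOpen U)
    (hUS : U ∩ P.kernel A ⊆ S) : U ∩ P.kernel A = ∅ := by
  refine eq_empty_of_forall_notMem fun x ⟨hxU, hxK⟩ => hxK.2 ?_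
  obtain ⟨r, hr, hball⟩ := Metric.isOpen_iff.1 hU x hxU
  have hcover : A ∩ ball x r ⊆ S ∪ (A \ P.kernel A) := fun y ⟨hyA, hyx⟩ =>
    (em (y ∈ P.kernel A)).imp (fun hyK => hUS ⟨hball hyx, hyK⟩) fun hyK => ⟨hyA, hyK⟩
  exact ⟨r, hr, (hS.sigmaPorous.union (P.sigmaPorous_diff_kernel A)).mono hcover⟩

end AbstractPorosity

/-- A closed non-σ-`P`-porous set is not `P`-reducible: it contains a nonempty closed
subset `F` in which no `P`-porous subset has nonempty relative interior. -/
theorem not_reducible_of_closed_not_sigmaPorous {X : Type*} [MetricSpace X]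
    (P : AbstractPorosity X) (A : Set X) (hAcl : IsClosed A) (hA : ¬ P.SigmaPorous A) :
    ∃ F : Set X, F.Nonempty ∧ IsClosed F ∧ F ⊆ A ∧
      ∀ S : Set X, S ⊆ F → P.Porous S →
        ∀ U : Set X, IsOpen U → U ∩ F ⊆ S → U ∩ F = ∅ := by
  exact ⟨P.kernel A, P.kernel_nonempty hA, P.isClosed_kernel hAcl, P.kernel_subset A,
    fun _ _ hS U hU hUS => P.inter_kernel_eq_empty_of_subset_porous hS hU hUS⟩
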